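/- Let T be a definitional tree of operation f and p a ground f-rooted pattern matched by no rule-node pattern of T. Then there exists an exempt node of T whose pattern matches p, and (by the uniqueness of the matching leaf) this exempt node is unique. -/

import Mathlib

/-!  A formalization of constructor-based term rewriting with definitional
trees, following Antoy's definitions.  Constructor and operation symbols are
natural numbers (disjoint by construction, since terms distinguish them);
constructors are grouped into types via `ctorType`. -/

/-- A signature: constructors (with type, arity and argument types) and
operations (with arity, argument types and result type). -/
structure Sig where
  ctorType : ℕ → ℕ
  ctorArity : ℕ → ℕ
  ctorArgTy : ℕ → ℕ → ℕ
  opArity : ℕ → ℕ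
  opArgTy : ℕ → ℕ → ℕ
  opResTy : ℕ → ℕ

namespace FLP

/-- Terms: variables (name and type annotation), constructor applications and
operation applications. -/
inductive Tm where
  | var : ℕ → ℕ → Tm
  | con : ℕ → List Tm → Tm
  | op  : ℕ → List Tm → Tm

/-- A substitution maps a variable (name and type) to a term. -/
def Subst := ℕ → ℕ → Tm

/-- Applying a substitution to a term. -/
def applySubst (σ : Subst) : Tm → Tm
  | .var v ty => σ v ty
  | .con c ts => .con c (ts.attach.map fun t => applySubst σ t.1)
  | .op f ts  => .op f (ts.attach.map fun t => applySubst σ t.1)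
decreasing_by
  all_goals (have h := List.sizeOf_lt_of_mem t.2; simp at h ⊢; omega)

/-- The list of variables (name, type) occurring in a term. -/
def varsOf : Tm → List (ℕ × ℕ)
  | .var v ty => [(v, ty)]
  | .con _ ts => ts.attach.flatMap fun t => varsOf t.1
  | .op _ ts  => ts.attach.flatMap fun t => varsOf t.1
decreasing_by
  all_goals (have h := List.sizeOf_lt_of_mem t.2; simp at h ⊢; omega)

/-- Ground terms: terms without variables. -/
inductive Ground : Tm → Prop
  | con : ∀ c ts, (∀ t ∈ ts, Ground t) → Ground (.con c ts)
  | op  : ∀ f ts, (∀ t ∈ ts, Ground t) → Ground (.op f ts)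

/-- Constructor terms: built from variables and constructor symbols only. -/
inductive CTerm : Tm → Prop
  | var : ∀ v ty, CTerm (.var v ty)
  | con : ∀ c ts, (∀ t ∈ ts, CTerm t) → CTerm (.con c ts)

/-- The typing judgment for terms. -/
inductive HasTy (S : Sig) : Tm → ℕ → Prop
  | var : ∀ v ty, HasTy S (.var v ty) ty
  | con : ∀ c ts, ts.length = S.ctorArity c →
      (∀ i (h : i < ts.length), HasTy S ts[i] (S.ctorArgTy c i)) →
      HasTy S (.con c ts) (S.ctorType c)
  | op : ∀ f ts, ts.length = S.opArity f →
      (∀ i (h : i < ts.length), HasTy S ts[i] (S.opArgTy f i)) →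
      HasTy S (.op f ts) (S.opResTy f)

/-- An `f`-rooted pattern: a linear, well-typed term `f t1 ... tn` whose
arguments are constructor terms. -/
def IsPat (S : Sig) (f : ℕ) (p : Tm) : Prop :=
  (∃ ts, p = .op f ts ∧ ∀ t ∈ ts, CTerm t) ∧
  ((varsOf p).map Prod.fst).Nodup ∧ HasTy S p (S.opResTy f)

/-- A ground `f`-rooted pattern. -/
def IsGroundPat (S : Sig) (f : ℕ) (p : Tm) : Prop :=
  IsPat S f p ∧ Ground p

/-- `q` matches `p` iff `p` is a substitution instance of `q`. -/
def Matches (q p : Tm) : Prop := ∃ σ : Subst, applySubst σ q = p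

/-- `q` unifies with `e` iff they have a common instance. -/
def Unifies (q e : Tm) : Prop :=
  ∃ σ τ : Subst, applySubst σ q = applySubst τ e

/-- The substitution replacing the variable named `x` by `t`. -/
def single (x : ℕ) (t : Tm) : Subst := fun v ty =>
  if v = x then t else .var v ty

/-- The substitution mapping the variables named by `xs` to the corresponding
terms of `ts`. -/
def substOf (xs : List ℕ) (ts : List Tm) : Subst := fun v ty =>
  match xs.findIdx? (· = v) with
  | some i => ts.getD i (.var v ty)
  | none => .var v ty

/-- Partial definitional trees: rule nodes `rule(p = r)`, exempt nodes
`exempt(p)`, and branch nodes storing their pattern, the name of the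
inductive variable, and one (constructor, subtree) pair per constructor of
the type of the inductive variable. -/
inductive DTree where
  | rule : Tm → Tm → DTree
  | exempt : Tm → DTree
  | branch : Tm → ℕ → List (ℕ × DTree) → DTree

/-- The pattern of the root node of a partial definitional tree. -/
def DTree.pat : DTree → Tm
  | .rule p _ => p
  | .exempt p => p
  | .branch p _ _ => p

/-- The patterns of the leaves of a partial definitional tree. -/
def DTree.leafPats : DTree → List Tm
  | .rule p _ => [p]
  | .exempt p => [p]
  | .branch _ _ cs => cs.attach.flatMap fun ct => ct.1.2.leafPats
decreasing_by
  all_goals (obtain ⟨⟨c', T'⟩, hm⟩ := ct;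
             have h := List.sizeOf_lt_of_mem hm; simp at h ⊢; omega)

/-- The patterns (left-hand sides) of the rule nodes. -/
def DTree.rulePats : DTree → List Tm
  | .rule p _ => [p]
  | .exempt _ => []
  | .branch _ _ cs => cs.attach.flatMap fun ct => ct.1.2.rulePats
decreasing_by
  all_goals (obtain ⟨⟨c', T'⟩, hm⟩ := ct;
             have h := List.sizeOf_lt_of_mem hm; simp at h ⊢; omega)

/-- The patterns of the exempt nodes. -/
def DTree.exemptPats : DTree → List Tm
  | .rule _ _ => []
  | .exempt p => [p]
  | .branch _ _ cs => cs.attach.flatMap fun ct => ct.1.2.exemptPats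
decreasing_by
  all_goals (obtain ⟨⟨c', T'⟩, hm⟩ := ct;
             have h := List.sizeOf_lt_of_mem hm; simp at h ⊢; omega)

/-- The rules contained in the rule nodes. -/
def DTree.rules : DTree → List (Tm × Tm)
  | .rule p r => [(p, r)]
  | .exempt _ => []
  | .branch _ _ cs => cs.attach.flatMap fun ct => ct.1.2.rules
decreasing_by
  all_goals (obtain ⟨⟨c', T'⟩, hm⟩ := ct;
             have h := List.sizeOf_lt_of_mem hm; simp at h ⊢; omega)

/-- Well-formed partial definitional trees w.r.t. a signature: at a branch
node with pattern `p` and inductive variable `x` (of type `ty`, occurring in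
`p`), there is exactly one child per constructor `c` of type `ty`, whose
pattern is obtained from `p` by substituting `x` with `c` applied to fresh
pairwise distinct variables. -/
inductive WF (S : Sig) : DTree → Prop
  | rule : ∀ p r, WF S (.rule p r)
  | exempt : ∀ p, WF S (.exempt p)
  | branch : ∀ p x ty (cs : List (ℕ × DTree)),
      (x, ty) ∈ varsOf p →
      (cs.map Prod.fst).Nodup →
      (∀ c, c ∈ cs.map Prod.fst ↔ S.ctorType c = ty) →
      (∀ ct ∈ cs, ∃ fresh : List (ℕ × ℕ),
          (fresh.map Prod.fst).Nodup ∧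
          fresh.length = S.ctorArity ct.1 ∧
          (∀ i (h : i < fresh.length), fresh[i].2 = S.ctorArgTy ct.1 i) ∧
          (∀ v ∈ fresh, v.1 ∉ (varsOf p).map Prod.fst) ∧
          (Prod.snd ct).pat =
            applySubst (single x (.con ct.1 (fresh.map fun v => Tm.var v.1 v.2))) p) →
      (∀ ct ∈ cs, WF S (Prod.snd ct)) →
      WF S (.branch p x cs)

/-- A definitional tree of the operation `f`: a well-formed partial
definitional tree whose root pattern is `f x1 ... xn` with pairwise distinct
(appropriately typed) variables. -/
def IsDTreeOf (S : Sig) (f : ℕ) (T : DTree) : Prop :=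
  WF S T ∧
  ∃ xs : List (ℕ × ℕ),
    (xs.map Prod.fst).Nodup ∧
    xs.length = S.opArity f ∧
    (∀ i (h : i < xs.length), xs[i].2 = S.opArgTy f i) ∧
    T.pat = .op f (xs.map fun v => Tm.var v.1 v.2)

/-- `Subtree N T` : `N` is a node (subtree) of `T`. -/
inductive Subtree : DTree → DTree → Prop
  | refl : ∀ T, Subtree T T
  | branch : ∀ p x cs ct N, ct ∈ cs → Subtree N (Prod.snd ct) →
      Subtree N (.branch p x cs)

/-- A tree has a rule node (somewhere, including its root). -/
inductive HasRule : DTree → Prop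
  | rule : ∀ p r, HasRule (.rule p r)
  | branch : ∀ p x cs ct, ct ∈ cs → HasRule (Prod.snd ct) →
      HasRule (.branch p x cs)

/-- A definitional tree is minimal iff there is some rule node below any
branch node of the tree. -/
def Minimal (T : DTree) : Prop :=
  ∀ p x cs, Subtree (.branch p x cs) T → HasRule (.branch p x cs)

/-! Induction on the tree. At a branch node whose pattern matches the ground pattern `p`, the
inductive variable is sent to a constructor application (the arguments of `p` are ground
constructor terms), and well-typedness makes that constructor one of the children, whose pattern
then matches `p` too; distinct children put distinct constructors at that variable, so no two
of them have a common instance. Hence exactly one leaf pattern matches `p`, and as no rule pattern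
does, it is an exempt one. What is carried down the tree is that node patterns are well-typed
with consistently typed variables. -/

-- Substitutions are taken as plain functions `ℕ → ℕ → Tm` below: `Subst` is not reducible, and
-- `rw`/`simp` fail on goals containing `σ v ty` for `σ : Subst`.

theorem Tm.induction {motive : Tm → Prop}
    (var : ∀ v ty, motive (.var v ty))
    (con : ∀ c ts, (∀ t ∈ ts, motive t) → motive (.con c ts))
    (op : ∀ f ts, (∀ t ∈ ts, motive t) → motive (.op f ts)) : ∀ t, motive t
  | .var v ty => var v ty
  | .con c ts => con c ts fun t _ => Tm.induction var con op t
  | .op f ts => op f ts fun t _ => Tm.induction var con op t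

@[simp] theorem applySubst_var (σ : ℕ → ℕ → Tm) (v ty : ℕ) :
    applySubst σ (.var v ty) = σ v ty :=
  applySubst.eq_1 σ v ty

@[simp] theorem applySubst_con (σ : ℕ → ℕ → Tm) (c : ℕ) (ts : List Tm) :
    applySubst σ (.con c ts) = .con c (ts.map (applySubst σ)) :=
  (applySubst.eq_2 σ c ts).trans (by simp)

@[simp] theorem applySubst_op (σ : ℕ → ℕ → Tm) (f : ℕ) (ts : List Tm) :
    applySubst σ (.op f ts) = .op f (ts.map (applySubst σ)) :=
  (applySubst.eq_3 σ f ts).trans (by simp)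

@[simp] theorem varsOf_var (v ty : ℕ) : varsOf (.var v ty) = [(v, ty)] := by
  rw [varsOf]

@[simp] theorem varsOf_con (c : ℕ) (ts : List Tm) :
    varsOf (.con c ts) = ts.flatMap varsOf := by
  rw [varsOf]; simp

@[simp] theorem varsOf_op (f : ℕ) (ts : List Tm) :
    varsOf (.op f ts) = ts.flatMap varsOf := by
  rw [varsOf]; simp

theorem applySubst_applySubst (σ τ : ℕ → ℕ → Tm) (t : Tm) :
    applySubst τ (applySubst σ t) = applySubst (fun v ty => applySubst τ (σ v ty)) t := by
  induction t using Tm.induction with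
  | var v ty => simp
  | con c ts ih => simpa using List.map_congr_left ih
  | op f ts ih => simpa using List.map_congr_left ih

theorem applySubst_eq_applySubst_iff {σ τ : ℕ → ℕ → Tm} {t : Tm} :
    applySubst σ t = applySubst τ t ↔ ∀ v ty, (v, ty) ∈ varsOf t → σ v ty = τ v ty := by
  induction t using Tm.induction with
  | var v ty => simp
  | con c ts ih =>
    simp only [applySubst_con, varsOf_con, Tm.con.injEq, true_and, List.map_inj_left,
      List.mem_flatMap]
    grind
  | op f ts ih =>
    simp only [applySubst_op, varsOf_op, Tm.op.injEq, true_and, List.map_inj_left,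
      List.mem_flatMap]
    grind

theorem varsOf_applySubst (σ : ℕ → ℕ → Tm) (t : Tm) :
    varsOf (applySubst σ t) = (varsOf t).flatMap fun vt => varsOf (σ vt.1 vt.2) := by
  induction t using Tm.induction with
  | var v ty => simp
  | con c ts ih => simpa [List.flatMap_map, List.flatMap_assoc] using List.flatMap_congr ih
  | op f ts ih => simpa [List.flatMap_map, List.flatMap_assoc] using List.flatMap_congr ih

theorem Matches.refl (t : Tm) : Matches t t :=
  ⟨fun v ty => .var v ty, by
    induction t using Tm.induction with
    | var v ty => simp
    | con c ts ih => simpa using List.map_congr_left ih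
    | op f ts ih => simpa using List.map_congr_left ih⟩

theorem Matches.trans {a b c : Tm} : Matches a b → Matches b c → Matches a c := by
  rintro ⟨σ, rfl⟩ ⟨τ, rfl⟩
  exact ⟨_, (applySubst_applySubst σ τ a).symm⟩

theorem unifies_of_matches {a b p : Tm} (ha : Matches a p) (hb : Matches b p) : Unifies a b := by
  obtain ⟨σ, rfl⟩ := ha
  obtain ⟨τ, hτ⟩ := hb
  exact ⟨σ, τ, hτ.symm⟩

theorem exists_eq_con_of_mem_varsOf {σ : ℕ → ℕ → Tm} {t : Tm}
    (hC : CTerm (applySubst σ t)) (hG : Ground (applySubst σ t)) :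
    ∀ {v ty}, (v, ty) ∈ varsOf t → ∃ c ts, σ v ty = .con c ts := by
  induction t using Tm.induction with
  | var v ty =>
    rintro w tw hw
    obtain ⟨rfl, rfl⟩ : w = v ∧ tw = ty := by simpa using hw
    rw [applySubst_var] at hC hG
    generalize σ _ _ = s at hC hG ⊢
    cases hC with
    | var => cases hG
    | con c ts _ => exact ⟨c, ts, rfl⟩
  | con c ts ih =>
    rintro v ty hv
    obtain ⟨t, ht, hv⟩ := List.mem_flatMap.mp (varsOf_con c ts ▸ hv)
    rw [applySubst_con] at hC hG
    cases hC with
    | con _ _ hC =>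
      cases hG with
      | con _ _ hG =>
        exact ih t ht (hC _ (List.mem_map_of_mem ht)) (hG _ (List.mem_map_of_mem ht)) hv
  | op f ts ih =>
    rw [applySubst_op] at hC
    cases hC

theorem hasTy_applySubst {S : Sig} {σ : ℕ → ℕ → Tm} {t : Tm} {A : ℕ} (h : HasTy S t A)
    (hσ : ∀ v ty, (v, ty) ∈ varsOf t → HasTy S (σ v ty) ty) :
    HasTy S (applySubst σ t) A := by
  induction h with
  | var v ty => simpa using hσ v ty (by simp)
  | con c ts hlen _ ih =>
    rw [applySubst_con]
    refine HasTy.con _ _ (by simpa using hlen) fun i hi => ?_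
    simp only [List.getElem_map]
    exact ih i (by simpa using hi) fun v ty hv =>
      hσ v ty (by rw [varsOf_con]; exact List.mem_flatMap.mpr ⟨_, List.getElem_mem _, hv⟩)
  | op f ts hlen _ ih =>
    rw [applySubst_op]
    refine HasTy.op _ _ (by simpa using hlen) fun i hi => ?_
    simp only [List.getElem_map]
    exact ih i (by simpa using hi) fun v ty hv =>
      hσ v ty (by rw [varsOf_op]; exact List.mem_flatMap.mpr ⟨_, List.getElem_mem _, hv⟩)

theorem hasTy_of_hasTy_applySubst {S : Sig} {σ : ℕ → ℕ → Tm} {t : Tm} {A : ℕ} (h : HasTy S t A)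
    (hσ : HasTy S (applySubst σ t) A) : ∀ {v ty}, (v, ty) ∈ varsOf t → HasTy S (σ v ty) ty := by
  induction h with
  | var v ty =>
    rintro w tw hw
    obtain ⟨rfl, rfl⟩ : w = v ∧ tw = ty := by simpa using hw
    simpa using hσ
  | con c ts _ _ ih =>
    rintro v ty hv
    obtain ⟨t, ht, hv⟩ := List.mem_flatMap.mp (varsOf_con c ts ▸ hv)
    obtain ⟨i, hi, rfl⟩ := List.mem_iff_getElem.mp ht
    rw [applySubst_con] at hσ
    cases hσ with
    | con _ _ _ hargs =>
      have := hargs i (by simpa using hi)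
      rw [List.getElem_map] at this
      exact ih i hi this hv
  | op f ts _ _ ih =>
    rintro v ty hv
    obtain ⟨t, ht, hv⟩ := List.mem_flatMap.mp (varsOf_op f ts ▸ hv)
    obtain ⟨i, hi, rfl⟩ := List.mem_iff_getElem.mp ht
    rw [applySubst_op] at hσ
    cases hσ with
    | op _ _ _ hargs =>
      have := hargs i (by simpa using hi)
      rw [List.getElem_map] at this
      exact ih i hi this hv

theorem map_applySubst_substOf {xs : List (ℕ × ℕ)} (hxs : (xs.map Prod.fst).Nodup) {ts : List Tm}
    (hlen : xs.length = ts.length) :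
    (xs.map fun v => Tm.var v.1 v.2).map (applySubst (substOf (xs.map Prod.fst) ts)) = ts := by
  refine List.ext_getElem (by simpa using hlen) fun i hi _ => ?_
  have hi' : i < xs.length := by simpa using hi
  have hfind : (xs.map Prod.fst).findIdx? (· = xs[i].1) = some i :=
    List.findIdx?_eq_some_iff_getElem.mpr ⟨by simpa using hi', by simp, fun j hj => by
      have hne := (hxs.getElem_inj_iff (hi := by simp; omega) (hj := by simpa using hi')).not.mpr
        hj.ne
      simp only [List.getElem_map] at hne
      simpa using hne⟩
  rw [List.getElem_map, List.getElem_map]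
  refine (applySubst_var _ _ _).trans ?_
  simp [substOf, hfind, ← hlen, hi']

def VarTypesConsistent (t : Tm) : Prop :=
  ∀ v ty₁ ty₂, (v, ty₁) ∈ varsOf t → (v, ty₂) ∈ varsOf t → ty₁ = ty₂

section Instantiate

variable {t : Tm} {x c : ℕ} {fresh : List (ℕ × ℕ)}

theorem mem_varsOf_applySubst_single {w tw : ℕ}
    (h : (w, tw) ∈ varsOf (applySubst (single x (.con c (fresh.map fun v => .var v.1 v.2))) t)) :
    (w, tw) ∈ fresh ∨ (w, tw) ∈ varsOf t ∧ w ≠ x := by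
  obtain ⟨⟨v, tv⟩, hv, hw⟩ := List.mem_flatMap.mp (varsOf_applySubst _ t ▸ h)
  by_cases hvx : v = x
  · simp [single, hvx, List.flatMap_map] at hw
    exact .inl hw
  · simp only [single, hvx, if_false, varsOf_var, List.mem_singleton, Prod.mk.injEq] at hw
    obtain ⟨rfl, rfl⟩ := hw
    exact .inr ⟨hv, hvx⟩

theorem VarTypesConsistent.applySubst_single (ht : VarTypesConsistent t)
    (hnd : (fresh.map Prod.fst).Nodup) (hfresh : ∀ v ∈ fresh, v.1 ∉ (varsOf t).map Prod.fst) :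
    VarTypesConsistent (applySubst (single x (.con c (fresh.map fun v => .var v.1 v.2))) t) := by
  intro v ty₁ ty₂ h₁ h₂
  rcases mem_varsOf_applySubst_single h₁ with h₁ | ⟨h₁, -⟩ <;>
    rcases mem_varsOf_applySubst_single h₂ with h₂ | ⟨h₂, -⟩
  · exact congrArg Prod.snd (List.inj_on_of_nodup_map hnd h₁ h₂ rfl)
  · exact (hfresh _ h₁ (List.mem_map.mpr ⟨_, h₂, rfl⟩)).elim
  · exact (hfresh _ h₂ (List.mem_map.mpr ⟨_, h₁, rfl⟩)).elim
  · exact ht v ty₁ ty₂ h₁ h₂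

theorem matches_applySubst_single (ht : VarTypesConsistent t) {ty : ℕ} (hx : (x, ty) ∈ varsOf t)
    (hnd : (fresh.map Prod.fst).Nodup) (hfresh : ∀ v ∈ fresh, v.1 ∉ (varsOf t).map Prod.fst)
    {σ : ℕ → ℕ → Tm} {ts : List Tm} (hσx : σ x ty = .con c ts) (hlen : fresh.length = ts.length) :
    Matches (applySubst (single x (.con c (fresh.map fun v => .var v.1 v.2))) t)
      (applySubst σ t) := by
  classical
  let τ : ℕ → ℕ → Tm := fun v tv =>
    if v ∈ fresh.map Prod.fst then substOf (fresh.map Prod.fst) ts v tv else σ v tv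
  refine ⟨τ, (applySubst_applySubst _ _ _).trans (applySubst_eq_applySubst_iff.mpr ?_)⟩
  intro v tv hv
  by_cases hvx : v = x
  · subst hvx
    obtain rfl := ht _ _ _ hv hx
    have hτ : (fresh.map fun v => Tm.var v.1 v.2).map (applySubst τ) =
        (fresh.map fun v => Tm.var v.1 v.2).map (applySubst (substOf (fresh.map Prod.fst) ts)) :=
      List.map_congr_left fun u hu => by
        obtain ⟨w, hw, rfl⟩ := List.mem_map.mp hu
        exact (applySubst_var _ _ _).trans
          ((if_pos (List.mem_map.mpr ⟨w, hw, rfl⟩)).trans (applySubst_var _ _ _).symm)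
    simp only [single, if_true, applySubst_con, hτ, map_applySubst_substOf hnd hlen, hσx]
  · have hv' : v ∉ fresh.map Prod.fst := fun h => by
      obtain ⟨w, hw, rfl⟩ := List.mem_map.mp h
      exact hfresh w hw (List.mem_map.mpr ⟨_, hv, rfl⟩)
    simp only [single, hvx, if_false, applySubst_var, τ, if_neg hv']

end Instantiate

/-- A weakening of `IsPat` (consistently typed variables instead of linearity) that is inherited by
the children of a branch node and suffices for the matching argument. -/
structure IsNodePat (S : Sig) (f : ℕ) (q : Tm) : Prop where
  root : ∃ qs, q = .op f qs
  consistent : VarTypesConsistent q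
  hasTy : HasTy S q (S.opResTy f)

theorem isNodePat_op_vars {S : Sig} {f : ℕ} {xs : List (ℕ × ℕ)} (hnd : (xs.map Prod.fst).Nodup)
    (hlen : xs.length = S.opArity f) (hty : ∀ i (h : i < xs.length), xs[i].2 = S.opArgTy f i) :
    IsNodePat S f (.op f (xs.map fun v => .var v.1 v.2)) where
  root := ⟨_, rfl⟩
  consistent v ty₁ ty₂ h₁ h₂ := by
    simp only [varsOf_op, List.flatMap_map, varsOf_var, List.flatMap_singleton'] at h₁ h₂
    exact congrArg Prod.snd (List.inj_on_of_nodup_map hnd h₁ h₂ rfl)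
  hasTy := by
    refine HasTy.op _ _ (by simpa using hlen) fun i hi => ?_
    rw [List.getElem_map, hty i (by simpa using hi)]
    exact HasTy.var _ _

theorem IsNodePat.applySubst_single {S : Sig} {f : ℕ} {t : Tm} (ht : IsNodePat S f t)
    {x ty : ℕ} (hx : (x, ty) ∈ varsOf t) {c : ℕ} (hc : S.ctorType c = ty) {fresh : List (ℕ × ℕ)}
    (hnd : (fresh.map Prod.fst).Nodup) (hlen : fresh.length = S.ctorArity c)
    (hty : ∀ i (h : i < fresh.length), fresh[i].2 = S.ctorArgTy c i)
    (hfresh : ∀ v ∈ fresh, v.1 ∉ (varsOf t).map Prod.fst) :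
    IsNodePat S f (applySubst (single x (.con c (fresh.map fun v => .var v.1 v.2))) t) where
  root := by
    obtain ⟨qs, rfl⟩ := ht.root
    exact ⟨_, applySubst_op _ _ _⟩
  consistent := ht.consistent.applySubst_single hnd hfresh
  hasTy := by
    refine hasTy_applySubst ht.hasTy fun v tv hv => ?_
    by_cases hvx : v = x
    · subst hvx
      obtain rfl := ht.consistent _ _ _ hv hx
      simp only [single, if_true]
      rw [← hc]
      refine HasTy.con _ _ (by simpa using hlen) fun i hi => ?_
      rw [List.getElem_map, hty i (by simpa using hi)]
      exact HasTy.var _ _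
    · simp only [single, hvx, if_false]
      exact HasTy.var _ _

theorem exists_eq_con_of_applySubst_eq_op {σ : ℕ → ℕ → Tm} {f g : ℕ} {qs ps : List Tm}
    (hσ : applySubst σ (.op f qs) = .op g ps) (hps : ∀ t ∈ ps, CTerm t) (hG : Ground (.op g ps))
    {v ty : ℕ} (hv : (v, ty) ∈ varsOf (.op f qs)) : ∃ c ts, σ v ty = .con c ts := by
  obtain ⟨q, hq, hv⟩ := List.mem_flatMap.mp (varsOf_op f qs ▸ hv)
  rw [applySubst_op, Tm.op.injEq] at hσ
  have hqps : applySubst σ q ∈ ps := hσ.2 ▸ List.mem_map_of_mem hq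
  cases hG with
  | op _ _ hG => exact exists_eq_con_of_mem_varsOf (hps _ hqps) (hG _ hqps) hv

namespace DTree

theorem leafPats_branch (p : Tm) (x : ℕ) (cs : List (ℕ × DTree)) :
    (branch p x cs).leafPats = cs.flatMap fun ct => ct.2.leafPats := by
  rw [leafPats]; exact (List.flatMap_subtype fun _ _ => rfl).trans (by rw [List.unattach_attach])

theorem rulePats_branch (p : Tm) (x : ℕ) (cs : List (ℕ × DTree)) :
    (branch p x cs).rulePats = cs.flatMap fun ct => ct.2.rulePats := by
  rw [rulePats]; exact (List.flatMap_subtype fun _ _ => rfl).trans (by rw [List.unattach_attach])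

theorem exemptPats_branch (p : Tm) (x : ℕ) (cs : List (ℕ × DTree)) :
    (branch p x cs).exemptPats = cs.flatMap fun ct => ct.2.exemptPats := by
  rw [exemptPats]; exact (List.flatMap_subtype fun _ _ => rfl).trans (by rw [List.unattach_attach])

theorem mem_leafPats_iff : ∀ (T : DTree) (q : Tm),
    q ∈ T.leafPats ↔ q ∈ T.rulePats ∨ q ∈ T.exemptPats
  | rule p r, q => by simp [leafPats, rulePats, exemptPats]
  | exempt p, q => by simp [leafPats, rulePats, exemptPats]
  | branch p x cs, q => by
    simp only [leafPats_branch, rulePats_branch, exemptPats_branch, List.mem_flatMap]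
    constructor
    · rintro ⟨ct, hct, hq⟩
      exact ((mem_leafPats_iff ct.2 q).mp hq).imp (⟨ct, hct, ·⟩) (⟨ct, hct, ·⟩)
    · rintro (⟨ct, hct, hq⟩ | ⟨ct, hct, hq⟩) <;>
        exact ⟨ct, hct, (mem_leafPats_iff ct.2 q).mpr (by simp [hq])⟩
termination_by T => sizeOf T
decreasing_by all_goals
  obtain ⟨c, T⟩ := ct
  have := List.sizeOf_lt_of_mem hct
  simp at this ⊢
  omega

end DTree

namespace WF

variable {S : Sig}

theorem matches_of_mem_leafPats {T : DTree} (hT : WF S T) {q : Tm} (hq : q ∈ T.leafPats) :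
    Matches T.pat q := by
  induction hT with
  | rule p r => simp only [DTree.leafPats, List.mem_singleton] at hq; exact hq ▸ .refl p
  | exempt p => simp only [DTree.leafPats, List.mem_singleton] at hq; exact hq ▸ .refl p
  | branch p x ty cs _ _ _ hchild _ ih =>
    obtain ⟨ct, hct, hq⟩ := List.mem_flatMap.mp (DTree.leafPats_branch p x cs ▸ hq)
    obtain ⟨_, -, -, -, -, hpat⟩ := hchild ct hct
    exact Matches.trans ⟨_, hpat.symm⟩ (ih ct hct hq)

-- Distinct children carry distinct constructors at the inductive variable.
theorem eq_of_unifies {p : Tm} {x : ℕ} {cs : List (ℕ × DTree)} (h : WF S (.branch p x cs))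
    {ct₁ ct₂ : ℕ × DTree} (h₁ : ct₁ ∈ cs) (h₂ : ct₂ ∈ cs) (hu : Unifies ct₁.2.pat ct₂.2.pat) :
    ct₁ = ct₂ := by
  obtain _ | _ | ⟨_, _, ty, _, hx, hnd, -, hchild, -⟩ := h
  obtain ⟨σ, τ, hστ⟩ := hu
  obtain ⟨_, -, -, -, -, hpat₁⟩ := hchild ct₁ h₁
  obtain ⟨_, -, -, -, -, hpat₂⟩ := hchild ct₂ h₂
  rw [hpat₁, hpat₂] at hστ
  have hx' := applySubst_eq_applySubst_iff.mp
    ((applySubst_applySubst _ _ _).symm.trans (hστ.trans (applySubst_applySubst _ _ _))) x ty hx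
  simp only [single, if_true] at hx'
  exact List.inj_on_of_nodup_map hnd h₁ h₂
    (Tm.con.inj ((applySubst_con _ _ _).symm.trans (hx'.trans (applySubst_con _ _ _)))).1

theorem exists_child_matches {f : ℕ} {p₀ : Tm} {x : ℕ} {cs : List (ℕ × DTree)}
    (h : WF S (.branch p₀ x cs)) (hp₀ : IsNodePat S f p₀) {p : Tm} (hp : IsGroundPat S f p)
    (hM : Matches p₀ p) : ∃ ct ∈ cs, IsNodePat S f ct.2.pat ∧ Matches ct.2.pat p := by
  obtain _ | _ | ⟨_, _, ty, _, hx, -, hiff, hchild, -⟩ := h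
  obtain ⟨⟨⟨ps, rfl, hps⟩, -, hpTy⟩, hpG⟩ := hp
  obtain ⟨σ, hσ⟩ := hM
  obtain ⟨qs, rfl⟩ := hp₀.root
  obtain ⟨c, ts, hσx⟩ := exists_eq_con_of_applySubst_eq_op hσ hps hpG hx
  have hcty : HasTy S (.con c ts) ty := hσx ▸ hasTy_of_hasTy_applySubst hp₀.hasTy (hσ ▸ hpTy) hx
  obtain ⟨hc, hlen⟩ : S.ctorType c = ty ∧ ts.length = S.ctorArity c := by
    cases hcty with | con _ _ hlen _ => exact ⟨rfl, hlen⟩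
  obtain ⟨ct, hct, rfl⟩ := List.mem_map.mp ((hiff c).mpr hc)
  obtain ⟨fresh, hnd, hflen, hty, hfresh, hpat⟩ := hchild ct hct
  refine ⟨ct, hct, hpat ▸ hp₀.applySubst_single hx hc hnd hflen hty hfresh, ?_⟩
  rw [hpat, ← hσ]
  exact matches_applySubst_single hp₀.consistent hx hnd hfresh hσx (hflen.trans hlen.symm)

theorem existsUnique_leafPat_matches {f : ℕ} {p : Tm} (hp : IsGroundPat S f p) {T : DTree}
    (hT : WF S T) (hpat : IsNodePat S f T.pat) (hM : Matches T.pat p) :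
    ∃! q, q ∈ T.leafPats ∧ Matches q p := by
  induction hT with
  | rule q r | exempt q =>
    refine ⟨q, ⟨by simp [DTree.leafPats], hM⟩, fun q' hq' => ?_⟩
    simpa [DTree.leafPats] using hq'.1
  | branch p₀ x ty cs hx hnd hiff hchild hwf ih =>
    have hT := WF.branch p₀ x ty cs hx hnd hiff hchild hwf
    obtain ⟨ct, hct, hpatc, hMc⟩ := hT.exists_child_matches hpat hp hM
    obtain ⟨q, ⟨hq, hqp⟩, huniq⟩ := ih ct hct hpatc hMc
    refine ⟨q, ⟨DTree.leafPats_branch p₀ x cs ▸ List.mem_flatMap.mpr ⟨ct, hct, hq⟩, hqp⟩, ?_⟩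
    rintro q' ⟨hq', hq'p⟩
    obtain ⟨ct', hct', hq'⟩ := List.mem_flatMap.mp (DTree.leafPats_branch p₀ x cs ▸ hq')
    obtain rfl : ct' = ct := hT.eq_of_unifies hct' hct
      (unifies_of_matches ((hwf ct' hct').matches_of_mem_leafPats hq' |>.trans hq'p) hMc)
    exact huniq q' ⟨hq', hq'p⟩

end WF

namespace IsDTreeOf

variable {S : Sig} {f : ℕ} {T : DTree}

theorem isNodePat_pat (hT : IsDTreeOf S f T) : IsNodePat S f T.pat := by
  obtain ⟨-, xs, hnd, hlen, hty, hroot⟩ := hT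
  exact hroot ▸ isNodePat_op_vars hnd hlen hty

theorem pat_matches (hT : IsDTreeOf S f T) {p : Tm} (hp : IsGroundPat S f p) : Matches T.pat p := by
  obtain ⟨-, xs, hnd, hlen, -, hroot⟩ := hT
  obtain ⟨⟨⟨ps, rfl, -⟩, -, hpTy⟩, -⟩ := hp
  have hplen : ps.length = S.opArity f := by cases hpTy with | op _ _ h _ => exact h
  refine ⟨substOf (xs.map Prod.fst) ps, ?_⟩
  rw [hroot]
  exact (applySubst_op _ _ _).trans
    (congrArg (Tm.op f) (map_applySubst_substOf hnd (hlen.trans hplen.symm)))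

end IsDTreeOf

/-- if no rule-node pattern of a definitional tree `T` of `f`
matches the ground `f`-rooted pattern `p`, then there is a unique exempt node
of `T` whose pattern matches `p`. -/
theorem exempt_exists_unique (S : Sig) (f : ℕ) (T : DTree)
    (hT : IsDTreeOf S f T)
    (p : Tm) (hp : IsGroundPat S f p)
    (hnorule : ∀ l ∈ T.rulePats, ¬ Matches l p) :
    ∃! q, q ∈ T.exemptPats ∧ Matches q p := by
  obtain ⟨q, ⟨hq, hqp⟩, huniq⟩ :=
    hT.1.existsUnique_leafPat_matches hp hT.isNodePat_pat (hT.pat_matches hp)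
  have hq_exempt : q ∈ T.exemptPats :=
    ((T.mem_leafPats_iff q).mp hq).resolve_left fun hrule => hnorule q hrule hqp
  refine ⟨q, ⟨hq_exempt, hqp⟩, fun q' ⟨hq', hq'p⟩ => huniq q' ⟨?_, hq'p⟩⟩
  exact (T.mem_leafPats_iff q').mpr (.inr hq')

end FLP
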